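/- Let X be a geodesic δ-hyperbolic space with base point o, b a Busemann function based at ξ ∈ ∂_∞X with base point o, and let w_y ∈ [x,y] satisfy d(y,w_y) = (x|ξ)_y. Then max{b(x), b(y)} ≥ b(w_y) + (1/2)d(x,y) − 16δ, and consequently min{ρ_ε(x), ρ_ε(y)} ≤ e^{16εδ} e^{−(ε/2)d(x,y)} ρ_ε(w_y) for every ε > 0. -/
import Mathlib


open Filter Set Metric Real MeasureTheory

noncomputable section

/-- The Gromov product `(x|y)_o`. -/
def gp {X : Type*} [MetricSpace X] (o x y : X) : ℝ :=
  (dist x o + dist y o - dist x y) / 2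

/-- A Gromov sequence (converging to a point of the boundary at infinity). -/
def IsGromovSeq {X : Type*} [MetricSpace X] (o : X) (s : ℕ → X) : Prop :=
  ∀ N : ℝ, ∃ I : ℕ, ∀ i j : ℕ, I ≤ i → I ≤ j → N ≤ gp o (s i) (s j)

/-- Equivalence of Gromov sequences. -/
def GromovEquiv {X : Type*} [MetricSpace X] (o : X) (s t : ℕ → X) : Prop :=
  Tendsto (fun n => gp o (s n) (t n)) atTop atTop

/-- Extended Gromov product `(x|ξ)_w` of a point `x` with the boundary point `ξ`
represented by the Gromov sequence `s`. -/
def egp {X : Type*} [MetricSpace X] (w x : X) (s : ℕ → X) : ℝ :=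
  sInf {r | ∃ t : ℕ → X, GromovEquiv w s t ∧ r = liminf (fun n => gp w x (t n)) atTop}

/-- Extended Gromov product `(ξ|η)_w` of two boundary points represented by Gromov
sequences `s` and `t`. -/
def egp2 {X : Type*} [MetricSpace X] (w : X) (s t : ℕ → X) : ℝ :=
  sInf {r | ∃ s' t' : ℕ → X, GromovEquiv w s s' ∧ GromovEquiv w t t' ∧
    r = liminf (fun n => gp w (s' n) (t' n)) atTop}

/-- The Busemann function based at the boundary point represented by `s`, with base point `o`:
`b(x) = (ξ|o)_x - (ξ|x)_o`. -/
def busemann {X : Type*} [MetricSpace X] (o : X) (s : ℕ → X) (x : X) : ℝ :=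
  egp x o s - egp o x s

/-- `δ`-hyperbolicity in the sense of Gromov. -/
def IsDeltaHyp (X : Type*) [MetricSpace X] (δ : ℝ) : Prop :=
  ∀ o x y z : X, min (gp o x z) (gp o z y) - δ ≤ gp o x y

/-- A geodesic metric space: every pair of points is joined by a geodesic. -/
def GeodesicSpace (X : Type*) [MetricSpace X] : Prop :=
  ∀ x y : X, ∃ γ : ℝ → X, γ 0 = x ∧ γ (dist x y) = y ∧
    ∀ a ∈ Icc (0:ℝ) (dist x y), ∀ b ∈ Icc (0:ℝ) (dist x y), dist (γ a) (γ b) = |a - b|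

section MyAux

variable {X : Type*} [MetricSpace X]

lemma my_gp_nonneg (o x y : X) : 0 ≤ gp o x y := by
  have h := dist_triangle x o y
  have h2 := dist_comm o y
  unfold gp; linarith

lemma my_gp_le_left (o x y : X) : gp o x y ≤ dist x o := by
  have h := dist_triangle y x o
  have h2 := dist_comm y x
  unfold gp; linarith

lemma my_gp_bddU (w a : X) (t : ℕ → X) :
    IsBoundedUnder (· ≤ ·) atTop (fun n => gp w a (t n)) :=
  isBoundedUnder_of ⟨dist a w, fun n => my_gp_le_left w a (t n)⟩

lemma my_gp_bddL (w a : X) (t : ℕ → X) :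
    IsBoundedUnder (· ≥ ·) atTop (fun n => gp w a (t n)) :=
  isBoundedUnder_of ⟨0, fun n => my_gp_nonneg w a (t n)⟩

lemma my_dd_bddU (p q : X) (t : ℕ → X) :
    IsBoundedUnder (· ≤ ·) atTop (fun n => dist (t n) p - dist (t n) q) :=
  isBoundedUnder_of ⟨dist p q, fun n => by
    have h := abs_dist_sub_le p q (t n)
    have h1 := dist_comm p (t n); have h2 := dist_comm q (t n)
    have := abs_le.1 h
    linarith [this.2]⟩

lemma my_dd_bddL (p q : X) (t : ℕ → X) :
    IsBoundedUnder (· ≥ ·) atTop (fun n => dist (t n) p - dist (t n) q) :=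
  isBoundedUnder_of ⟨-dist p q, fun n => by
    have h := abs_dist_sub_le p q (t n)
    have h1 := dist_comm p (t n); have h2 := dist_comm q (t n)
    have := abs_le.1 h
    simp only [ge_iff_le]
    linarith [this.1]⟩

lemma my_dist_tendsto (o : X) {s : ℕ → X} (hs : IsGromovSeq o s) :
    Tendsto (fun n => dist (s n) o) atTop atTop := by
  rw [tendsto_atTop_atTop]
  intro N
  obtain ⟨I, hI⟩ := hs N
  refine ⟨I, fun n hn => ?_⟩
  have h := hI n n hn hn
  unfold gp at h
  rw [dist_self] at h
  linarith

lemma my_gromovEquiv_self (o w : X) {s : ℕ → X} (hs : IsGromovSeq o s) :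
    GromovEquiv w s s := by
  unfold GromovEquiv
  have h1 : Tendsto (fun n => dist (s n) o - dist o w) atTop atTop :=
    tendsto_atTop_add_const_right atTop (-dist o w) (my_dist_tendsto o hs)
  refine tendsto_atTop_mono (fun n => ?_) h1
  have h2 := dist_triangle (s n) w o
  have h3 := dist_comm w o
  unfold gp
  rw [dist_self]
  linarith

lemma my_egp_le_liminf (o w a : X) {s : ℕ → X} (hs : IsGromovSeq o s) :
    egp w a s ≤ liminf (fun n => gp w a (s n)) atTop := by
  apply csInf_le
  · refine ⟨0, ?_⟩
    rintro r ⟨t, _, rfl⟩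
    exact le_liminf_of_le ((my_gp_bddU w a t).isCoboundedUnder_ge)
      (Eventually.of_forall fun n => my_gp_nonneg w a (t n))
  · exact ⟨s, my_gromovEquiv_self o w hs, rfl⟩

lemma my_liminf_le_egp {δ : ℝ} (hhyp : IsDeltaHyp X δ) (o w a : X) {s : ℕ → X}
    (hs : IsGromovSeq o s) :
    liminf (fun n => gp w a (s n)) atTop - δ ≤ egp w a s := by
  refine le_csInf ⟨_, s, my_gromovEquiv_self o w hs, rfl⟩ ?_
  rintro r ⟨t, ht, rfl⟩
  have hev : ∀ᶠ n in atTop, gp w a (s n) - δ ≤ gp w a (t n) := by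
    filter_upwards [ht.eventually_ge_atTop (dist a w)] with n hn
    have h2 := hhyp w a (t n) (s n)
    have h3 : gp w a (s n) ≤ gp w (s n) (t n) := (my_gp_le_left w a (s n)).trans hn
    rw [min_eq_left h3] at h2
    linarith
  have h4 : liminf (fun n => gp w a (s n) - δ) atTop ≤ liminf (fun n => gp w a (t n)) atTop :=
    liminf_le_liminf hev
      (isBoundedUnder_of ⟨-δ, fun n => by simpa using (my_gp_nonneg w a (s n))⟩)
      ((my_gp_bddU w a t).isCoboundedUnder_ge)
  rwa [liminf_sub_const atTop _ δ ((my_gp_bddU w a s).isCoboundedUnder_ge)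
    (my_gp_bddL w a s)] at h4

/-- Oscillation lemma. -/
lemma my_osc {f : ℕ → ℝ} {c : ℝ} (hU : IsBoundedUnder (· ≤ ·) atTop f)
    (hL : IsBoundedUnder (· ≥ ·) atTop f) {I : ℕ}
    (h : ∀ n m, I ≤ n → I ≤ m → f n ≤ f m + c) :
    limsup f atTop ≤ liminf f atTop + c := by
  have h1 : ∀ m, I ≤ m → limsup f atTop ≤ f m + c := fun m hm =>
    limsup_le_of_le hL.isCoboundedUnder_le (eventually_atTop.2 ⟨I, fun n hn => h n m hn hm⟩)
  have h2 : limsup f atTop - c ≤ liminf f atTop :=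
    le_liminf_of_le hU.isCoboundedUnder_ge
      (eventually_atTop.2 ⟨I, fun m hm => by linarith [h1 m hm]⟩)
  linarith

/-- Pairwise almost-monotonicity of `n ↦ d(s n, w) − d(s n, o)`. -/
lemma my_pairwise {δ : ℝ} (hhyp : IsDeltaHyp X δ) (o w : X) {s : ℕ → X}
    (hs : IsGromovSeq o s) :
    ∃ I : ℕ, ∀ n m, I ≤ n → I ≤ m →
      dist (s n) w - dist (s n) o ≤ (dist (s m) w - dist (s m) o) + 2 * δ := by
  obtain ⟨I, hI⟩ := hs (dist w o)
  refine ⟨I, fun n m hn hm => ?_⟩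
  have h1 := hI m n hm hn
  have h2 := hhyp o w (s n) (s m)
  have h5 : gp o w (s m) ≤ gp o (s m) (s n) := (my_gp_le_left o w (s m)).trans h1
  rw [min_eq_left h5] at h2
  unfold gp at h2
  have c1 := dist_comm w (s n)
  have c2 := dist_comm w (s m)
  linarith

/-- Oscillation of `H n = d(s n, w) − d(s n, o)` is at most `2δ`. Also for `-H`. -/
lemma my_osc_H {δ : ℝ} (hhyp : IsDeltaHyp X δ) (o w : X) {s : ℕ → X} (hs : IsGromovSeq o s) :
    limsup (fun n => dist (s n) w - dist (s n) o) atTop ≤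
      liminf (fun n => dist (s n) w - dist (s n) o) atTop + 2 * δ := by
  obtain ⟨I, hI⟩ := my_pairwise hhyp o w hs
  exact my_osc (my_dd_bddU w o s) (my_dd_bddL w o s) hI

lemma my_osc_negH {δ : ℝ} (hhyp : IsDeltaHyp X δ) (o w : X) {s : ℕ → X} (hs : IsGromovSeq o s) :
    limsup (fun n => dist (s n) o - dist (s n) w) atTop ≤
      liminf (fun n => dist (s n) o - dist (s n) w) atTop + 2 * δ := by
  obtain ⟨I, hI⟩ := my_pairwise hhyp o w hs
  refine my_osc (my_dd_bddU o w s) (my_dd_bddL o w s) (I := I) ?_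
  intro n m hn hm
  linarith [hI m n hm hn]

end MyAux

section MyKey

variable {X : Type*} [MetricSpace X]

lemma my_busemann_diff {δ : ℝ} (hhyp : IsDeltaHyp X δ) (o : X) {s : ℕ → X}
    (hs : IsGromovSeq o s) (u w : X) :
    liminf (fun n => dist (s n) u - dist (s n) w) atTop - 4 * δ ≤
      busemann o s u - busemann o s w := by
  have e1 : liminf (fun n => gp u o (s n)) atTop - δ ≤ egp u o s :=
    my_liminf_le_egp hhyp o u o hs
  have e2 : egp o u s ≤ liminf (fun n => gp o u (s n)) atTop :=
    my_egp_le_liminf o o u hs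
  have e3 : egp w o s ≤ liminf (fun n => gp w o (s n)) atTop :=
    my_egp_le_liminf o w o hs
  have e4 : liminf (fun n => gp o w (s n)) atTop - δ ≤ egp o w s :=
    my_liminf_le_egp hhyp o o w hs
  -- s1 : liminf A + liminf Q ≤ liminf P
  have idP : ((fun n => dist (s n) u - dist (s n) o) + fun n => gp o u (s n)) =
      fun n => gp u o (s n) := by
    funext n
    simp only [Pi.add_apply]
    unfold gp
    have c1 := dist_comm o u; have c2 := dist_comm o (s n); have c3 := dist_comm u (s n)
    linarith
  have s1 : liminf (fun n => dist (s n) u - dist (s n) o) atTop +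
      liminf (fun n => gp o u (s n)) atTop ≤ liminf (fun n => gp u o (s n)) atTop := by
    rw [← idP]
    exact le_liminf_add (my_dd_bddL u o s) (my_dd_bddU u o s) (my_gp_bddL o u s)
      (my_gp_bddU o u s).isCoboundedUnder_ge
  -- s2 : liminf NH + liminf R ≤ liminf T
  have idT : ((fun n => dist (s n) o - dist (s n) w) + fun n => gp w o (s n)) =
      fun n => gp o w (s n) := by
    funext n
    simp only [Pi.add_apply]
    unfold gp
    have c1 := dist_comm w o; have c2 := dist_comm w (s n); have c3 := dist_comm o (s n)
    linarith
  have s2 : liminf (fun n => dist (s n) o - dist (s n) w) atTop +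
      liminf (fun n => gp w o (s n)) atTop ≤ liminf (fun n => gp o w (s n)) atTop := by
    rw [← idT]
    exact le_liminf_add (my_dd_bddL o w s) (my_dd_bddU o w s) (my_gp_bddL w o s)
      (my_gp_bddU w o s).isCoboundedUnder_ge
  -- s3 : liminf G ≤ limsup NH + liminf A
  have idG : ((fun n => dist (s n) o - dist (s n) w) + fun n => dist (s n) u - dist (s n) o) =
      fun n => dist (s n) u - dist (s n) w := by
    funext n; simp only [Pi.add_apply]; ring
  have s3 : liminf (fun n => dist (s n) u - dist (s n) w) atTop ≤
      limsup (fun n => dist (s n) o - dist (s n) w) atTop +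
      liminf (fun n => dist (s n) u - dist (s n) o) atTop := by
    rw [← idG]
    exact liminf_add_le (my_dd_bddL o w s) (my_dd_bddU o w s) (my_dd_bddL u o s)
      (my_dd_bddU u o s).isCoboundedUnder_ge
  have s4 := my_osc_negH hhyp o w hs
  unfold busemann
  linarith

lemma my_osc_G {δ : ℝ} (hhyp : IsDeltaHyp X δ) (o u w : X) {s : ℕ → X}
    (hs : IsGromovSeq o s) :
    limsup (fun n => dist (s n) u - dist (s n) w) atTop ≤
      liminf (fun n => dist (s n) u - dist (s n) w) atTop + 4 * δ := by
  have idG : ((fun n => dist (s n) u - dist (s n) o) + fun n => dist (s n) o - dist (s n) w) =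
      fun n => dist (s n) u - dist (s n) w := by
    funext n; simp only [Pi.add_apply]; ring
  have s5 : limsup (fun n => dist (s n) u - dist (s n) w) atTop ≤
      limsup (fun n => dist (s n) u - dist (s n) o) atTop +
      limsup (fun n => dist (s n) o - dist (s n) w) atTop := by
    rw [← idG]
    exact limsup_add_le (my_dd_bddL u o s) (my_dd_bddU u o s)
      (my_dd_bddL o w s).isCoboundedUnder_le (my_dd_bddU o w s)
  have s6 : liminf (fun n => dist (s n) u - dist (s n) o) atTop +
      liminf (fun n => dist (s n) o - dist (s n) w) atTop ≤
      liminf (fun n => dist (s n) u - dist (s n) w) atTop := by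
    rw [← idG]
    exact le_liminf_add (my_dd_bddL u o s) (my_dd_bddU u o s) (my_dd_bddL o w s)
      (my_dd_bddU o w s).isCoboundedUnder_ge
  have oscA := my_osc_H hhyp o u hs
  have oscNH := my_osc_negH hhyp o w hs
  linarith

end MyKey

/-- With `w_y ∈ [x,y]` at distance `(x|ξ)_y` from `y`, we have
`max{b(x), b(y)} ≥ b(w_y) + (1/2)d(x,y) − 16δ`, and consequently for every `ε > 0`,
`min{ρ_ε(x), ρ_ε(y)} ≤ e^{16εδ} e^{−(ε/2)d(x,y)} ρ_ε(w_y)` where `ρ_ε = e^{−εb}`. -/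
theorem busemann_max_at_endpoints {X : Type*} [MetricSpace X] [ProperSpace X]
    (δ : ℝ) (hδ : 0 ≤ δ) (hhyp : IsDeltaHyp X δ) (hgeo : GeodesicSpace X)
    (o : X) (s : ℕ → X) (hs : IsGromovSeq o s)
    (x y : X) (γ : ℝ → X) (hγ0 : γ 0 = x) (hγ1 : γ (dist x y) = y)
    (hiso : ∀ a ∈ Icc (0:ℝ) (dist x y), ∀ b ∈ Icc (0:ℝ) (dist x y),
      dist (γ a) (γ b) = |a - b|)
    (he : egp y x s ∈ Icc (0:ℝ) (dist x y))
    (wy : X) (hwy : wy = γ (dist x y - egp y x s)) :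
    max (busemann o s x) (busemann o s y) ≥
        busemann o s wy + (1 / 2) * dist x y - 16 * δ ∧
    ∀ ε : ℝ, 0 < ε →
      min (Real.exp (-(ε * busemann o s x))) (Real.exp (-(ε * busemann o s y))) ≤
        Real.exp (16 * ε * δ) * Real.exp (-(ε / 2 * dist x y)) *
          Real.exp (-(ε * busemann o s wy)) := by
  obtain ⟨hE0, hEd⟩ := he
  have hd0 : (0:ℝ) ≤ dist x y := dist_nonneg
  have hmem1 : (0:ℝ) ∈ Icc (0:ℝ) (dist x y) := ⟨le_refl _, hd0⟩
  have hmem2 : dist x y - egp y x s ∈ Icc (0:ℝ) (dist x y) := ⟨by linarith, by linarith⟩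
  have hmem3 : dist x y ∈ Icc (0:ℝ) (dist x y) := ⟨hd0, le_refl _⟩
  have dXW : dist x wy = dist x y - egp y x s := by
    have h := hiso 0 hmem1 _ hmem2
    rw [hγ0, ← hwy] at h
    rw [h, zero_sub, abs_neg, abs_of_nonneg (by linarith : (0:ℝ) ≤ dist x y - egp y x s)]
  have dYW : dist y wy = egp y x s := by
    have h := hiso _ hmem3 _ hmem2
    rw [hγ1, ← hwy] at h
    have h2 : dist x y - (dist x y - egp y x s) = egp y x s := by ring
    rw [h, h2, abs_of_nonneg hE0]
  have hΛ1 : egp y x s ≤ liminf (fun n => gp y x (s n)) atTop := my_egp_le_liminf o y x hs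
  have hΛ2 : liminf (fun n => gp y x (s n)) atTop - δ ≤ egp y x s :=
    my_liminf_le_egp hhyp o y x hs
  -- y-side eventual bound
  have hy : ∀ m : ℝ, 0 < m → dist y wy - 2*δ - 2*m ≤
      liminf (fun n => dist (s n) y - dist (s n) wy) atTop := by
    intro m hm
    have hev : ∀ᶠ n in atTop, egp y x s - m < gp y x (s n) :=
      eventually_lt_of_lt_liminf (by linarith) (my_gp_bddL y x s)
    refine le_liminf_of_le (my_dd_bddU y wy s).isCoboundedUnder_ge ?_
    filter_upwards [hev] with n hn
    have t1 := hhyp x wy (s n) y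
    have c1 := dist_comm wy x; have c2 := dist_comm y x; have c3 := dist_comm wy y
    have c4 := dist_comm y (s n); have c5 := dist_comm x (s n); have c6 := dist_comm wy (s n)
    rcases min_cases (gp x wy y) (gp x y (s n)) with ⟨hmin, _⟩ | ⟨hmin, _⟩ <;>
      rw [hmin] at t1 <;> unfold gp at t1 hn <;> linarith
  -- x-side frequent bound
  have hx : ∀ m : ℝ, 0 < m → dist x wy - 4*δ - 2*m ≤
      limsup (fun n => dist (s n) x - dist (s n) wy) atTop := by
    intro m hm
    have hfreq : ∃ᶠ n in atTop, gp y x (s n) < egp y x s + δ + m :=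
      frequently_lt_of_liminf_lt (my_gp_bddU y x s).isCoboundedUnder_ge (by linarith)
    refine le_limsup_of_frequently_le ?_ (my_dd_bddU x wy s)
    refine hfreq.mono fun n hn => ?_
    have t2 := hhyp y wy (s n) x
    have c1 := dist_comm wy x; have c2 := dist_comm y x; have c3 := dist_comm wy y
    have c4 := dist_comm y (s n); have c5 := dist_comm x (s n); have c6 := dist_comm wy (s n)
    rcases min_cases (gp y wy x) (gp y x (s n)) with ⟨hmin, _⟩ | ⟨hmin, _⟩ <;>
      rw [hmin] at t2 <;> unfold gp at t2 hn <;> linarith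
  -- x endpoint
  have hbx : dist x wy - 12*δ ≤ busemann o s x - busemann o s wy := by
    have k1 := my_busemann_diff hhyp o hs x wy
    have k2 := my_osc_G hhyp o x wy hs
    have k3 : dist x wy - 4*δ ≤ limsup (fun n => dist (s n) x - dist (s n) wy) atTop := by
      refine le_of_forall_pos_le_add fun ε hε => ?_
      have := hx (ε/2) (by linarith)
      linarith
    linarith
  -- y endpoint
  have hby : dist y wy - 6*δ ≤ busemann o s y - busemann o s wy := by
    have k1 := my_busemann_diff hhyp o hs y wy
    have k3 : dist y wy - 2*δ ≤ liminf (fun n => dist (s n) y - dist (s n) wy) atTop := by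
      refine le_of_forall_pos_le_add fun ε hε => ?_
      have := hy (ε/2) (by linarith)
      linarith
    linarith
  have hsum : dist x wy + dist y wy = dist x y := by rw [dXW, dYW]; ring
  have part1 : max (busemann o s x) (busemann o s y) ≥
      busemann o s wy + (1 / 2) * dist x y - 16 * δ := by
    rcases le_total (dist x wy) (dist y wy) with hc | hc
    · have h1 := le_max_right (busemann o s x) (busemann o s y)
      have h2 : dist x y / 2 ≤ dist y wy := by linarith
      linarith
    · have h1 := le_max_left (busemann o s x) (busemann o s y)
      have h2 : dist x y / 2 ≤ dist x wy := by linarith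
      linarith
  refine ⟨part1, fun ε hε => ?_⟩
  have key : Real.exp (-(ε * max (busemann o s x) (busemann o s y))) ≤
      Real.exp (16 * ε * δ) * Real.exp (-(ε / 2 * dist x y)) *
        Real.exp (-(ε * busemann o s wy)) := by
    rw [← Real.exp_add, ← Real.exp_add]
    apply Real.exp_le_exp.2
    have hmul := mul_le_mul_of_nonneg_left part1 hε.le
    nlinarith
  rcases le_total (busemann o s x) (busemann o s y) with hc | hc
  · rw [max_eq_right hc] at key
    exact le_trans (min_le_right _ _) key
  · rw [max_eq_left hc] at key
    exact le_trans (min_le_left _ _) key
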